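/- arXiv:1706.08175 — 3 statements merged into one kernel-verified Lean document; each statement's English description precedes it below -/
import Mathlib

section
/- Let C be an n×m integer matrix, ℓ a prime, and for each j ≥ 0 let M_j = { x ∈ ℤ_ℓ^m : C x ∈ ℓ^j ℤ_ℓ^n }, and let e_j denote the multiplicity of ℓ^j among the ℓ-elementary divisors of C (with e_0 the ℓ-rank of C). Then e_j equals the 𝔽_ℓ-dimension of the quotient of the reductions mod ℓ: e_j = dim( (M_j + ℓℤ_ℓ^m)/ℓℤ_ℓ^m ) − dim( (M_{j+1} + ℓℤ_ℓ^m)/ℓℤ_ℓ^m ). -/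
open Matrix

/-- The reduction mod `p` of a subset of `ℤ_[p]^m`: the `𝔽_p`-subspace of `𝔽_p^m`
generated by the componentwise reductions of its elements (which, for a
`ℤ_[p]`-submodule, is exactly its image `(M + pℤ_[p]^m)/pℤ_[p]^m`). -/
noncomputable def redBar (p m : ℕ) [Fact p.Prime] (S : Set (Fin m → ℤ_[p])) :
    Submodule (ZMod p) (Fin m → ZMod p) :=
  Submodule.span (ZMod p)
    ((fun x : Fin m → ℤ_[p] => fun i => PadicInt.toZMod (x i)) '' S)

/-- `M_j = {x ∈ ℤ_ℓ^m : C x ∈ ℓ^j ℤ_ℓ^n}`. -/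
def Mset (p n m : ℕ) [Fact p.Prime] (C : Matrix (Fin n) (Fin m) ℤ) (j : ℕ) :
    Set (Fin m → ℤ_[p]) :=
  {x | ∀ i, (p : ℤ_[p]) ^ j ∣ ((C.map (Int.cast : ℤ → ℤ_[p])) *ᵥ x) i}

/-- The multiplicity of `p^a` among the elementary divisors of an integer matrix,
read off from a diagonal form `D` of it: the number of nonzero diagonal entries
of `p`-adic valuation exactly `a`. -/
noncomputable def elemDivCount (p : ℕ) {n m : ℕ} (D : Matrix (Fin n) (Fin m) ℤ) (a : ℕ) : ℕ :=
  Nat.card {ij : Fin n × Fin m // (ij.1 : ℕ) = (ij.2 : ℕ) ∧ D ij.1 ij.2 ≠ 0 ∧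
      (p : ℤ) ^ a ∣ D ij.1 ij.2 ∧ ¬ (p : ℤ) ^ (a + 1) ∣ D ij.1 ij.2}

/-!
The right-hand side does not change when `C` is replaced by `P * C * Q`: multiplication by `Q`
carries the `M_j` of `P * C * Q` onto that of `C`, and the reduction of `Q` mod `p` is
invertible, so it preserves the dimensions of the reductions.
For a diagonal matrix with entries `d_k`, a vector `x` lies in `M_j` iff `p^j ∣ d_k x_k` for all
`k`; if `p^j ∤ d_k` this forces `p ∣ x_k`, since otherwise `x_k` is a `p`-adic unit. Hence the
reduction of `M_j` is spanned by the basis vectors `e_k` with `p^j ∣ d_k`, its dimension counts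
these `k`, and the difference of two consecutive dimensions counts the `d_k` of valuation `j`.
-/

section Diagonal

variable {R : Type*} {n m : ℕ}

def diagEntry [Zero R] (D : Matrix (Fin n) (Fin m) R) (k : Fin m) : R :=
  if h : (k : ℕ) < n then D ⟨k, h⟩ k else 0

lemma diagEntry_eq [Zero R] (D : Matrix (Fin n) (Fin m) R) {i : Fin n} {k : Fin m}
    (h : (i : ℕ) = k) : diagEntry D k = D i k := by
  obtain ⟨i, hi⟩ := i
  obtain ⟨k, hk⟩ := k
  subst h
  simp [diagEntry, hi]

lemma diagEntry_map [Zero R] {S : Type*} [Zero S] (D : Matrix (Fin n) (Fin m) R) {f : R → S}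
    (hf : f 0 = 0) (k : Fin m) : diagEntry (D.map f) k = f (diagEntry D k) := by
  unfold diagEntry
  split_ifs <;> simp [hf]

lemma mulVec_apply_of_diag [NonUnitalNonAssocSemiring R] {D : Matrix (Fin n) (Fin m) R}
    (hD : ∀ (i : Fin n) (k : Fin m), (i : ℕ) ≠ k → D i k = 0) (x : Fin m → R) (i : Fin n) :
    (D *ᵥ x) i = if h : (i : ℕ) < m then D i ⟨i, h⟩ * x ⟨i, h⟩ else 0 := by
  rw [mulVec, dotProduct]
  split_ifs with h
  · refine Finset.sum_eq_single _ (fun k _ hk => ?_) (by simp)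
    rw [hD i k fun e => hk (Fin.ext e.symm), zero_mul]
  · exact Finset.sum_eq_zero fun k _ => by rw [hD i k (by omega), zero_mul]

lemma forall_dvd_mulVec_iff_of_diag [CommSemiring R] {D : Matrix (Fin n) (Fin m) R}
    (hD : ∀ (i : Fin n) (k : Fin m), (i : ℕ) ≠ k → D i k = 0) (a : R) (x : Fin m → R) :
    (∀ i, a ∣ (D *ᵥ x) i) ↔ ∀ k, a ∣ diagEntry D k * x k := by
  constructor
  · intro h k
    by_cases hk : (k : ℕ) < n
    · simpa [mulVec_apply_of_diag hD, diagEntry, hk] using h ⟨k, hk⟩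
    · simp [diagEntry, hk]
  · intro h i
    rw [mulVec_apply_of_diag hD]
    split_ifs with hi
    · simpa [diagEntry] using h ⟨i, hi⟩
    · exact dvd_zero a

end Diagonal

section ChangeOfBasis

variable {R : Type*} [CommRing R] {ι κ : Type*} [Fintype κ]

lemma dvd_mulVec_apply_of_forall_dvd (A : Matrix ι κ R) {a : R} {v : κ → R}
    (h : ∀ k, a ∣ v k) (i : ι) : a ∣ (A *ᵥ v) i :=
  Finset.dvd_sum fun k _ => (h k).mul_left _

lemma forall_dvd_mulVec_iff_of_isUnit [Fintype ι] [DecidableEq ι] {U : Matrix ι ι R}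
    (hU : IsUnit U) (a : R) (v : ι → R) : (∀ i, a ∣ (U *ᵥ v) i) ↔ ∀ i, a ∣ v i := by
  refine ⟨fun h => ?_, dvd_mulVec_apply_of_forall_dvd U⟩
  have hv : U⁻¹ *ᵥ (U *ᵥ v) = v := by
    rw [mulVec_mulVec, nonsing_inv_mul _ ((isUnit_iff_isUnit_det U).mp hU), one_mulVec]
  simpa only [hv] using dvd_mulVec_apply_of_forall_dvd U⁻¹ h

lemma isUnit_map_intCast [Fintype ι] [DecidableEq ι] {Q : Matrix ι ι ℤ} (hQ : IsUnit Q.det) :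
    IsUnit (Q.map (Int.cast : ℤ → R)) :=
  ((isUnit_iff_isUnit_det Q).mpr hQ).map (Int.castRingHom R).mapMatrix

end ChangeOfBasis

lemma finrank_map_mulVecLin_of_isUnit {K : Type*} [Field K] {ι : Type*} [Fintype ι]
    [DecidableEq ι] {B : Matrix ι ι K} (hB : IsUnit B) (N : Submodule K (ι → K)) :
    Module.finrank K (N.map B.mulVecLin) = Module.finrank K N :=
  (Submodule.equivMapOfInjective _ (mulVec_injective_iff_isUnit.mpr hB) N).finrank_eq.symm

section Padic

variable {p : ℕ} [Fact p.Prime]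

lemma Mset_mul_eq_preimage {n m : ℕ} (C : Matrix (Fin n) (Fin m) ℤ)
    {P : Matrix (Fin n) (Fin n) ℤ} (hP : IsUnit P.det) (Q : Matrix (Fin m) (Fin m) ℤ) (j : ℕ) :
    Mset p n m (P * C * Q) j
      = (fun y => Q.map (Int.cast : ℤ → ℤ_[p]) *ᵥ y) ⁻¹' Mset p n m C j := by
  ext y
  have hmap : (P * C * Q).map (Int.cast : ℤ → ℤ_[p]) = P.map (Int.cast : ℤ → ℤ_[p]) *
      C.map (Int.cast : ℤ → ℤ_[p]) * Q.map (Int.cast : ℤ → ℤ_[p]) :=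
    Matrix.map_mul (f := Int.castRingHom ℤ_[p]) |>.trans (congrArg (· * _) Matrix.map_mul)
  simp_rw [Mset, Set.mem_preimage, Set.mem_ofPred, hmap, ← mulVec_mulVec]
  exact forall_dvd_mulVec_iff_of_isUnit (isUnit_map_intCast hP) _ _

lemma redBar_image_mulVec {m m' : ℕ} (A : Matrix (Fin m') (Fin m) ℤ_[p])
    (S : Set (Fin m → ℤ_[p])) :
    redBar p m' ((fun x => A *ᵥ x) '' S)
      = (redBar p m S).map (A.map PadicInt.toZMod).mulVecLin := by
  rw [redBar, redBar, Submodule.map_span, ← Set.image_comp, ← Set.image_comp]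
  refine congrArg _ (Set.image_congr fun x _ => funext fun i => ?_)
  simpa [Function.comp_def] using RingHom.map_mulVec PadicInt.toZMod A x i

lemma finrank_redBar_Mset_mul {n m : ℕ} (C : Matrix (Fin n) (Fin m) ℤ)
    {P : Matrix (Fin n) (Fin n) ℤ} {Q : Matrix (Fin m) (Fin m) ℤ}
    (hP : IsUnit P.det) (hQ : IsUnit Q.det) (j : ℕ) :
    Module.finrank (ZMod p) (redBar p m (Mset p n m C j))
      = Module.finrank (ZMod p) (redBar p m (Mset p n m (P * C * Q) j)) := by
  have hQp : IsUnit (Q.map (Int.cast : ℤ → ℤ_[p])) := isUnit_map_intCast hQ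
  have hQbar : IsUnit ((Q.map (Int.cast : ℤ → ℤ_[p])).map PadicInt.toZMod) :=
    hQp.map (PadicInt.toZMod (p := p)).mapMatrix
  rw [← Set.image_preimage_eq (Mset p n m C j) (mulVec_surjective_iff_isUnit.mpr hQp),
    ← Mset_mul_eq_preimage C hP Q j, redBar_image_mulVec, finrank_map_mulVecLin_of_isUnit hQbar]

lemma mem_Mset_iff_of_diag {n m : ℕ} {D : Matrix (Fin n) (Fin m) ℤ}
    (hD : ∀ (i : Fin n) (k : Fin m), (i : ℕ) ≠ k → D i k = 0) (j : ℕ) (x : Fin m → ℤ_[p]) :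
    x ∈ Mset p n m D j ↔ ∀ k, (p : ℤ_[p]) ^ j ∣ ((diagEntry D k : ℤ) : ℤ_[p]) * x k := by
  have hDp : ∀ (i : Fin n) (k : Fin m), (i : ℕ) ≠ k → D.map (Int.cast : ℤ → ℤ_[p]) i k = 0 :=
    fun i k h => by simp [hD i k h]
  simp only [Mset, Set.mem_ofPred, forall_dvd_mulVec_iff_of_diag hDp,
    diagEntry_map D Int.cast_zero]

lemma toZMod_eq_zero_of_pow_dvd_mul {j : ℕ} {d : ℤ} {y : ℤ_[p]}
    (h : (p : ℤ_[p]) ^ j ∣ d * y) (hd : ¬ (p : ℤ) ^ j ∣ d) : PadicInt.toZMod y = 0 := by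
  rw [← RingHom.mem_ker, PadicInt.ker_toZMod, IsLocalRing.mem_maximalIdeal, mem_nonunits_iff]
  exact fun hy => hd ((PadicInt.pow_p_dvd_int_iff j d).mp (hy.dvd_mul_right.mp h))

lemma redBar_Mset_of_diag {n m : ℕ} {D : Matrix (Fin n) (Fin m) ℤ}
    (hD : ∀ (i : Fin n) (k : Fin m), (i : ℕ) ≠ k → D i k = 0) (j : ℕ) :
    redBar p m (Mset p n m D j) = Submodule.span (ZMod p)
      ((fun k => Pi.single k 1) '' {k | (p : ℤ) ^ j ∣ diagEntry D k}) := by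
  refine le_antisymm (Submodule.span_le.mpr ?_) (Submodule.span_le.mpr ?_)
  · rintro _ ⟨x, hx, rfl⟩
    rw [mem_Mset_iff_of_diag hD] at hx
    change (fun i => PadicInt.toZMod (x i)) ∈ _
    rw [← Finset.univ_sum_single fun i => PadicInt.toZMod (x i)]
    refine Submodule.sum_mem _ fun k _ => ?_
    by_cases hk : (p : ℤ) ^ j ∣ diagEntry D k
    · rw [← mul_one (PadicInt.toZMod (x k)), ← smul_eq_mul, Pi.single_smul']
      exact Submodule.smul_mem _ _ (Submodule.subset_span ⟨k, hk, rfl⟩)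
    · rw [toZMod_eq_zero_of_pow_dvd_mul (hx k) hk, Pi.single_zero]
      exact Submodule.zero_mem _
  · rintro _ ⟨k, hk, rfl⟩
    refine Submodule.subset_span ⟨Pi.single k 1, ?_, ?_⟩
    · refine (mem_Mset_iff_of_diag hD j _).mpr fun t => ?_
      rcases eq_or_ne t k with rfl | ht
      · simpa [PadicInt.pow_p_dvd_int_iff] using hk
      · simp [ht]
    · funext i
      simp [Pi.single_apply, apply_ite]

end Padic

lemma finrank_span_image_single_one {K ι : Type*} [Field K] [DecidableEq ι] [Finite ι]
    (s : Set ι) :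
    Module.finrank K (Submodule.span K ((fun i => Pi.single i (1 : K)) '' s)) = s.ncard := by
  have := Fintype.ofFinite s
  rw [Set.image_eq_range, ← Nat.card_coe_set_eq, Nat.card_eq_fintype_card]
  exact finrank_span_eq_card ((Pi.linearIndependent_single_one ι K).comp _ Subtype.val_injective)

lemma elemDivCount_eq_ncard (p : ℕ) {n m : ℕ} (D : Matrix (Fin n) (Fin m) ℤ) (a : ℕ) :
    elemDivCount p D a =
      {k | (p : ℤ) ^ a ∣ diagEntry D k ∧ ¬ (p : ℤ) ^ (a + 1) ∣ diagEntry D k}.ncard := by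
  rw [elemDivCount, ← Nat.card_coe_set_eq]
  refine Nat.card_eq_of_bijective
    (fun ij => ⟨ij.1.2, by rw [Set.mem_ofPred, diagEntry_eq D ij.2.1]; exact ij.2.2.2⟩) ⟨?_, ?_⟩
  · intro ⟨⟨i, k⟩, hik, _⟩ ⟨⟨i', k'⟩, hik', _⟩ hkk'
    obtain rfl : k = k' := congrArg Subtype.val hkk'
    obtain rfl : i = i' := Fin.ext (hik.trans hik'.symm)
    rfl
  · rintro ⟨k, hdvd, hndvd⟩
    have hk : (k : ℕ) < n := by
      by_contra hk
      exact hndvd (by simp [diagEntry, hk])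
    rw [diagEntry_eq D (i := ⟨k, hk⟩) rfl] at hdvd hndvd
    exact ⟨⟨(⟨k, hk⟩, k), rfl, fun h0 => hndvd (h0 ▸ dvd_zero _), hdvd, hndvd⟩, rfl⟩

theorem stmt0 (p n m : ℕ) [Fact p.Prime] (C : Matrix (Fin n) (Fin m) ℤ)
    (P : Matrix (Fin n) (Fin n) ℤ) (Q : Matrix (Fin m) (Fin m) ℤ)
    (hP : IsUnit P.det) (hQ : IsUnit Q.det)
    (hdiag : ∀ (i : Fin n) (j : Fin m), ((i : ℕ) ≠ (j : ℕ)) → (P * C * Q) i j = 0) (j : ℕ) :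
    (elemDivCount p (P * C * Q) j : ℤ)
      = Module.finrank (ZMod p) (redBar p m (Mset p n m C j))
        - Module.finrank (ZMod p) (redBar p m (Mset p n m C (j + 1))) := by
  have hdim : ∀ i, Module.finrank (ZMod p) (redBar p m (Mset p n m C i))
      = {k | (p : ℤ) ^ i ∣ diagEntry (P * C * Q) k}.ncard := fun i => by
    rw [finrank_redBar_Mset_mul C hP hQ, redBar_Mset_of_diag hdiag, finrank_span_image_single_one]
  have hsub : {k | (p : ℤ) ^ (j + 1) ∣ diagEntry (P * C * Q) k}
      ⊆ {k | (p : ℤ) ^ j ∣ diagEntry (P * C * Q) k} :=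
    fun k hk => (pow_dvd_pow _ j.le_succ).trans hk
  rw [elemDivCount_eq_ncard, hdim, hdim, ← Nat.cast_sub (Set.ncard_le_ncard hsub),
    ← Set.ncard_sdiff hsub]
  rfl
end

section
/- Let C be an n×n integer matrix with an integer eigenvalue φ of geometric multiplicity c (over ℚ_ℓ). Fix a prime ℓ dividing φ with v_ℓ(φ) = d. Then the 𝔽_ℓ-dimension of the reduction mod ℓ of M_d = { x ∈ ℤ_ℓ^n : Cx ∈ ℓ^d ℤ_ℓ^n } is at least c. -/
/-!
Let `N = ker (C - φ)` on `ℤ_[p]ⁿ`. Kernels commute with localization, so `N ⊗ ℚ_[p]` is the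
`φ`-eigenspace over `ℚ_[p]` and `N`, free over the PID `ℤ_[p]`, has rank `c`. Every `x ∈ N` has
`Cx = φx ∈ pᵈ ℤ_[p]ⁿ`, so `N ⊆ M_d`. Finally `N` is saturated (`p z ∈ N → z ∈ N`), hence a
basis of `N` stays linearly independent modulo `p`, giving `c` independent vectors in the
reduction of `M_d`.
-/

open Matrix

open Module nonZeroDivisors

theorem Matrix.finrank_ker_mulVecLin_map_algebraMap {R K ι : Type*} [CommRing R] [IsDomain R]
    [Field K] [Algebra R K] [IsFractionRing R K] [Fintype ι] [DecidableEq ι]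
    (A : Matrix ι ι R) :
    finrank K (LinearMap.ker (A.map (algebraMap R K)).mulVecLin)
      = finrank R (LinearMap.ker A.mulVecLin) := by
  let f : (ι → R) →ₗ[R] (ι → K) := .pi fun i ↦ Algebra.linearMap R K ∘ₗ .proj i
  have hmap : IsLocalizedModule.map R⁰ f f A.mulVecLin
      = (A.map (algebraMap R K)).mulVecLin.restrictScalars R := by
    refine IsLocalizedModule.linearMap_ext R⁰ f f (LinearMap.ext fun x ↦ funext fun i ↦ ?_)
    simp [f, IsLocalizedModule.map_apply, Matrix.mulVec, dotProduct]
  have := LinearMap.toKerLocalized_isLocalizedModule K R⁰ f f A.mulVecLin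
  rw [IsLocalization.finrank_eq K R⁰ le_rfl
      (N := LinearMap.ker (A.map (algebraMap R K)).mulVecLin),
    ← IsLocalizedModule.finrank_eq R⁰ (LinearMap.toKerIsLocalized R⁰ f f A.mulVecLin) le_rfl,
    hmap]
  rfl

namespace PadicInt

variable {p : ℕ} [Fact p.Prime]

theorem toZMod_eq_zero_iff_dvd {x : ℤ_[p]} : toZMod x = 0 ↔ (p : ℤ_[p]) ∣ x := by
  rw [← RingHom.mem_ker, ker_toZMod, maximalIdeal_eq_span_p, Ideal.mem_span_singleton]

theorem linearIndependent_toZMod_basis {ι κ : Type*} [Fintype κ]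
    {N : Submodule ℤ_[p] (ι → ℤ_[p])} (hN : ∀ z, (p : ℤ_[p]) • z ∈ N → z ∈ N)
    (b : Basis κ ℤ_[p] N) :
    LinearIndependent (ZMod p) fun k i ↦ toZMod ((b k : ι → ℤ_[p]) i) := by
  rw [Fintype.linearIndependent_iff]
  intro a ha k
  choose A hA using fun k ↦ ZMod.ringHom_surjective (toZMod (p := p)) (a k)
  set Y : N := ∑ k, A k • b k
  have hY : ∀ i, (p : ℤ_[p]) ∣ (Y : ι → ℤ_[p]) i := by
    intro i
    rw [← toZMod_eq_zero_iff_dvd]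
    simpa [Y, hA, Finset.sum_apply] using congrFun ha i
  choose z hz using hY
  have hzN : z ∈ N := hN z (by convert Y.2; exact funext fun i ↦ (hz i).symm)
  have hYz : Y = (p : ℤ_[p]) • ⟨z, hzN⟩ := Subtype.ext (funext hz)
  have hrepr : b.repr Y k = A k := congrFun (b.repr_sum_self A) k
  rw [← hA, ← hrepr, hYz, map_smul, Finsupp.smul_apply, smul_eq_mul, map_mul]
  simp

end PadicInt

theorem finrank_le_finrank_redBar {p m : ℕ} [Fact p.Prime] {S : Set (Fin m → ℤ_[p])}
    {N : Submodule ℤ_[p] (Fin m → ℤ_[p])} (hN : ∀ z, (p : ℤ_[p]) • z ∈ N → z ∈ N)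
    (hNS : (N : Set (Fin m → ℤ_[p])) ⊆ S) :
    finrank ℤ_[p] N ≤ finrank (ZMod p) (redBar p m S) := by
  obtain ⟨r, b⟩ := Submodule.basisOfPid (Pi.basisFun ℤ_[p] (Fin m)) N
  calc finrank ℤ_[p] N = r := by rw [finrank_eq_card_basis b, Fintype.card_fin]
    _ = finrank (ZMod p) (Submodule.span (ZMod p) (Set.range
          fun k i ↦ PadicInt.toZMod ((b k : Fin m → ℤ_[p]) i))) := by
      rw [finrank_span_eq_card (PadicInt.linearIndependent_toZMod_basis hN b), Fintype.card_fin]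
    _ ≤ finrank (ZMod p) (redBar p m S) :=
      Submodule.finrank_mono <| Submodule.span_mono <|
        Set.range_subset_iff.2 fun k ↦ ⟨b k, hNS (b k).2, rfl⟩

theorem mem_Mset_of_mulVec_eq_smul {p n : ℕ} [Fact p.Prime] {C : Matrix (Fin n) (Fin n) ℤ}
    {φ : ℤ} {d : ℕ} (hd : (p : ℤ) ^ d ∣ φ) {x : Fin n → ℤ_[p]}
    (hx : C.map (Int.cast : ℤ → ℤ_[p]) *ᵥ x = (φ : ℤ_[p]) • x) :
    x ∈ Mset p n n C d := by
  intro i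
  rw [hx, Pi.smul_apply, smul_eq_mul]
  exact Dvd.dvd.mul_right (by exact_mod_cast map_dvd (Int.castRingHom ℤ_[p]) hd) _

theorem stmt2_general (p n : ℕ) [Fact p.Prime] (C : Matrix (Fin n) (Fin n) ℤ) (φ : ℤ)
    (d : ℕ)
    (hd1 : (p : ℤ) ^ d ∣ φ)
    (c : ℕ)
    (hc : c = Module.finrank ℚ_[p]
      (LinearMap.ker ((C.map (Int.cast : ℤ → ℚ_[p])).mulVecLin
        - (φ : ℚ_[p]) • (LinearMap.id : (Fin n → ℚ_[p]) →ₗ[ℚ_[p]] (Fin n → ℚ_[p]))))) :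
    c ≤ Module.finrank (ZMod p) (redBar p n (Mset p n n C d)) := by
  set A : Matrix (Fin n) (Fin n) ℤ_[p] := C.map Int.cast - (φ : ℤ_[p]) • 1
  have hAK : (C.map Int.cast).mulVecLin - (φ : ℚ_[p]) • LinearMap.id
      = (A.map (algebraMap ℤ_[p] ℚ_[p])).mulVecLin := by
    have : A.map (algebraMap ℤ_[p] ℚ_[p]) = C.map Int.cast - (φ : ℚ_[p]) • 1 := by
      ext i j
      rcases eq_or_ne i j with rfl | h <;> simp [A, *]
    rw [this]
    ext x i
    simp
  have hp : (p : ℤ_[p]) ≠ 0 := by exact_mod_cast (Fact.out : p.Prime).ne_zero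
  rw [hc, hAK, Matrix.finrank_ker_mulVecLin_map_algebraMap]
  refine finrank_le_finrank_redBar (fun z hz ↦ by simpa [hp] using hz) fun x hx ↦ ?_
  apply mem_Mset_of_mulVec_eq_smul hd1
  simpa [A, Matrix.sub_mulVec, Matrix.smul_mulVec, sub_eq_zero] using hx

theorem stmt2 (p n : ℕ) [Fact p.Prime] (C : Matrix (Fin n) (Fin n) ℤ) (φ : ℤ)
    (hdvd : (p : ℤ) ∣ φ) (d : ℕ)
    (hd1 : (p : ℤ) ^ d ∣ φ) (hd2 : ¬ (p : ℤ) ^ (d + 1) ∣ φ)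
    (c : ℕ)
    (hc : c = Module.finrank ℚ_[p]
      (LinearMap.ker ((C.map (Int.cast : ℤ → ℚ_[p])).mulVecLin
        - (φ : ℚ_[p]) • (LinearMap.id : (Fin n → ℚ_[p]) →ₗ[ℚ_[p]] (Fin n → ℚ_[p]))))) :
    c ≤ Module.finrank (ZMod p) (redBar p n (Mset p n n C d)) :=
  stmt2_general p n C φ d hd1 c hc
end

section
/- Let q = p^t be a prime power and V a 2m-dimensional symplectic space over 𝔽_q (m ≥ 2). The polar graph Γ_s(q,m), whose vertices are the 1-dimensional subspaces of V with two distinct vertices adjacent iff they are orthogonal with respect to the symplectic form, is a strongly regular graph with parameters v = (q^{2m} − 1)/(q − 1), k = q·(q^{m−1}−1)/(q−1)·(q^{m−1}+1), λ = (q^{2m−2}−1)/(q−1) − 2, μ = (q^{2m−2}−1)/(q−1). -/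
open Matrix

/-- The points of the polar space: (isotropic) 1-dimensional subspaces of `F^n`.
For a symplectic space every 1-dimensional subspace is isotropic. -/
abbrev polarVertex (F : Type*) [Field F] (n : ℕ) :=
  {W : Submodule F (Fin n → F) // Module.finrank F W = 1}

/-- The polar graph: two distinct 1-spaces are adjacent iff they are orthogonal
with respect to the form `B`. -/
def polarGraph {F : Type*} [Field F] {n : ℕ}
    (B : (Fin n → F) →ₗ[F] (Fin n → F) →ₗ[F] F) : SimpleGraph (polarVertex F n) where
  Adj X Y := X ≠ Y ∧ ∀ x ∈ X.1, ∀ y ∈ Y.1, B x y = 0 ∧ B y x = 0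
  symm := by
    constructor
    rintro X Y ⟨hne, hB⟩
    exact ⟨hne.symm, fun y hy x hx => ⟨(hB x hx y hy).2, (hB x hx y hy).1⟩⟩
  loopless := by constructor; rintro X ⟨hne, -⟩; exact hne rfl

noncomputable instance polarVertexFintype (F : Type*) [Field F] [Fintype F] (n : ℕ) :
    Fintype (polarVertex F n) := by
  have : Finite (Submodule F (Fin n → F)) :=
    Finite.of_injective (fun W => (W : Set (Fin n → F))) SetLike.coe_injective
  exact Fintype.ofFinite _

noncomputable instance polarGraphDecRel {F : Type*} [Field F] {n : ℕ}
    (B : (Fin n → F) →ₗ[F] (Fin n → F) →ₗ[F] F) : DecidableRel (polarGraph B).Adj :=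
  fun _ _ => Classical.dec _

/-! The neighbours of a point `X` are the other points of the hyperplane `X^⊥`, and the common
neighbours of two points `X ≠ Y` are the points of the codimension-2 subspace `(X ⊔ Y)^⊥` other
than `X` and `Y`, which lie in it exactly when they are adjacent. A `d`-dimensional space over
`𝔽_q` has `(q^d - 1)/(q - 1)` points, and this gives all four parameters. -/

open Module LinearMap.BilinForm

section Lines

variable {F V : Type*} [Field F] [Fintype F] [AddCommGroup V] [Module F V] [FiniteDimensional F V]

variable (F V) in
lemma natCard_finrank_eq_one :
    Nat.card {U : Submodule F V // finrank F U = 1} =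
      (Fintype.card F ^ finrank F V - 1) / (Fintype.card F - 1) := by
  rw [← Nat.card_congr (Projectivization.equivSubmodule F V), Projectivization.card'',
    Module.natCard_eq_pow_finrank (K := F), Nat.card_eq_fintype_card]

lemma natCard_finrank_eq_one_le (W : Submodule F V) :
    Nat.card {U : {U : Submodule F V // finrank F U = 1} // U.1 ≤ W} =
      (Fintype.card F ^ finrank F W - 1) / (Fintype.card F - 1) := by
  rw [← natCard_finrank_eq_one F W]
  refine Nat.card_congr ((Equiv.subtypeSubtypeEquivSubtypeInter _ (· ≤ W)).trans
    ((Equiv.subtypeEquivRight fun _ => and_comm).trans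
      (Equiv.subtypeSubtypeEquivSubtypeInter (· ≤ W) _).symm)) |>.trans ?_
  exact Nat.card_congr ((Submodule.MapSubtype.orderIso W).toEquiv.subtypeEquiv
    fun U => by rw [← Submodule.finrank_map_subtype_eq W U]; rfl).symm

end Lines

section Orthogonal

variable {K V : Type*} [Field K] [AddCommGroup V] [Module K V] {B : LinearMap.BilinForm K V}

lemma orthogonal_sup (W₁ W₂ : Submodule K V) :
    B.orthogonal (W₁ ⊔ W₂) = B.orthogonal W₁ ⊓ B.orthogonal W₂ := by
  refine le_antisymm (le_inf (orthogonal_le le_sup_left) (orthogonal_le le_sup_right)) ?_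
  rintro v ⟨h₁, h₂⟩ w hw
  obtain ⟨a, ha, b, hb, rfl⟩ := Submodule.mem_sup.1 hw
  simp [h₁ a ha, h₂ b hb]

lemma le_orthogonal_comm (hB : B.IsRefl) {W₁ W₂ : Submodule K V} :
    W₁ ≤ B.orthogonal W₂ ↔ W₂ ≤ B.orthogonal W₁ :=
  ⟨fun h _ hw₂ _ hw₁ => hB _ _ (h hw₁ _ hw₂), fun h _ hw₁ _ hw₂ => hB _ _ (h hw₂ _ hw₁)⟩

lemma le_orthogonal_self_of_finrank_eq_one (hB : B.IsAlt) {W : Submodule K V}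
    (hW : finrank K W = 1) : W ≤ B.orthogonal W := by
  rw [← Projectivization.submodule_mk'' W hW, Projectivization.submodule_eq,
    Submodule.span_singleton_le_iff_mem]
  intro w hw
  obtain ⟨a, rfl⟩ := Submodule.mem_span_singleton.1 hw
  simp [hB _]

lemma finrank_sup_eq_two [FiniteDimensional K V] {W₁ W₂ : Submodule K V}
    (h₁ : finrank K W₁ = 1) (h₂ : finrank K W₂ = 1) (hne : W₁ ≠ W₂) :
    finrank K ↥(W₁ ⊔ W₂) = 2 := by
  have hinf : finrank K ↥(W₁ ⊓ W₂) = 0 := by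
    by_contra h
    have hle : finrank K ↥(W₁ ⊓ W₂) ≤ 1 := h₁ ▸ Submodule.finrank_mono inf_le_left
    have eq_left : W₁ ⊓ W₂ = W₁ := Submodule.eq_of_le_of_finrank_eq inf_le_left (by omega)
    have eq_right : W₁ ⊓ W₂ = W₂ := Submodule.eq_of_le_of_finrank_eq inf_le_right (by omega)
    exact hne (eq_left.symm.trans eq_right)
  have := Submodule.finrank_sup_add_finrank_inf_eq W₁ W₂
  omega

end Orthogonal

section PolarGraph

variable {F : Type*} [Field F] {n : ℕ} {B : LinearMap.BilinForm F (Fin n → F)}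

lemma polarGraph_adj_iff (hB : B.IsRefl) {X Y : polarVertex F n} :
    (polarGraph B).Adj X Y ↔ X ≠ Y ∧ Y.1 ≤ B.orthogonal X.1 :=
  and_congr_right fun _ => ⟨fun h y hy x hx => (h x hx y hy).1,
    fun h x hx _ hy => ⟨h hy x hx, hB _ _ (h hy x hx)⟩⟩

lemma neighborSet_polarGraph (hB : B.IsAlt) (X : polarVertex F n) :
    (polarGraph B).neighborSet X = {Z | Z.1 ≤ B.orthogonal X.1} \ {X} := by
  ext Z
  simp [polarGraph_adj_iff hB.isRefl, and_comm, eq_comm]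

lemma commonNeighbors_polarGraph (hB : B.IsAlt) (X Y : polarVertex F n) :
    (polarGraph B).commonNeighbors X Y = {Z | Z.1 ≤ B.orthogonal (X.1 ⊔ Y.1)} \ {X, Y} := by
  ext Z
  simp only [SimpleGraph.commonNeighbors_eq, neighborSet_polarGraph hB, orthogonal_sup,
    Set.mem_inter_iff, Set.mem_sdiff, Set.mem_ofPred_eq, Set.mem_singleton_iff, le_inf_iff,
    Set.mem_insert_iff, not_or]
  tauto

lemma le_orthogonal_sup_iff_polarGraph_adj (hB : B.IsAlt) {X Y : polarVertex F n}
    (hne : X ≠ Y) :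
    X.1 ≤ B.orthogonal (X.1 ⊔ Y.1) ↔ (polarGraph B).Adj X Y := by
  rw [orthogonal_sup, le_inf_iff, polarGraph_adj_iff hB.isRefl,
    le_orthogonal_comm hB.isRefl (W₁ := X.1) (W₂ := Y.1)]
  simp [le_orthogonal_self_of_finrank_eq_one hB X.2, hne]

end PolarGraph

section Parameters

variable {F : Type*} [Field F] [Fintype F] {n : ℕ} {B : LinearMap.BilinForm F (Fin n → F)}

lemma ncard_setOf_le_orthogonal (hB : B.Nondegenerate) (W : Submodule F (Fin n → F)) :
    {Z : polarVertex F n | Z.1 ≤ B.orthogonal W}.ncard =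
      (Fintype.card F ^ (n - finrank F W) - 1) / (Fintype.card F - 1) := by
  rw [← Nat.card_coe_set_eq, Set.coe_ofPred, natCard_finrank_eq_one_le, finrank_orthogonal hB,
    finrank_fin_fun]

lemma card_polarVertex :
    Fintype.card (polarVertex F n) = (Fintype.card F ^ n - 1) / (Fintype.card F - 1) := by
  rw [← Nat.card_eq_fintype_card, natCard_finrank_eq_one, finrank_fin_fun]

lemma degree_polarGraph (hB : B.IsAlt) (hnd : B.Nondegenerate) (X : polarVertex F n) :
    (polarGraph B).degree X = (Fintype.card F ^ (n - 1) - 1) / (Fintype.card F - 1) - 1 := by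
  rw [← SimpleGraph.card_neighborSet_eq_degree, ← Nat.card_eq_fintype_card,
    neighborSet_polarGraph hB, Nat.card_coe_set_eq,
    Set.ncard_sdiff_singleton_of_mem (le_orthogonal_self_of_finrank_eq_one hB X.2),
    ncard_setOf_le_orthogonal hnd, X.2]

lemma card_commonNeighbors_polarGraph_of_adj (hB : B.IsAlt) (hnd : B.Nondegenerate)
    {X Y : polarVertex F n} (hadj : (polarGraph B).Adj X Y) :
    Fintype.card ((polarGraph B).commonNeighbors X Y) =
      (Fintype.card F ^ (n - 2) - 1) / (Fintype.card F - 1) - 2 := by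
  have hne := hadj.ne
  have hsub : {X, Y} ⊆ {Z : polarVertex F n | Z.1 ≤ B.orthogonal (X.1 ⊔ Y.1)} := by
    rintro Z (rfl | rfl)
    · exact (le_orthogonal_sup_iff_polarGraph_adj hB hne).2 hadj
    · rw [Set.mem_ofPred_eq, sup_comm]
      exact (le_orthogonal_sup_iff_polarGraph_adj hB hne.symm).2 hadj.symm
  rw [← Nat.card_eq_fintype_card, commonNeighbors_polarGraph hB, Nat.card_coe_set_eq,
    Set.ncard_sdiff hsub, Set.ncard_pair hne, ncard_setOf_le_orthogonal hnd,
    finrank_sup_eq_two X.2 Y.2 (Subtype.coe_injective.ne hne)]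

lemma card_commonNeighbors_polarGraph_of_not_adj (hB : B.IsAlt) (hnd : B.Nondegenerate)
    {X Y : polarVertex F n} (hne : X ≠ Y) (hadj : ¬(polarGraph B).Adj X Y) :
    Fintype.card ((polarGraph B).commonNeighbors X Y) =
      (Fintype.card F ^ (n - 2) - 1) / (Fintype.card F - 1) := by
  have hdisj : Disjoint {Z : polarVertex F n | Z.1 ≤ B.orthogonal (X.1 ⊔ Y.1)} {X, Y} := by
    rw [Set.disjoint_right]
    rintro Z (rfl | rfl)
    · exact mt (le_orthogonal_sup_iff_polarGraph_adj hB hne).1 hadj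
    · rw [Set.mem_ofPred_eq, sup_comm]
      exact mt (le_orthogonal_sup_iff_polarGraph_adj hB hne.symm).1 (mt .symm hadj)
  rw [← Nat.card_eq_fintype_card, commonNeighbors_polarGraph hB, hdisj.sdiff_eq_left,
    Nat.card_coe_set_eq, ncard_setOf_le_orthogonal hnd,
    finrank_sup_eq_two X.2 Y.2 (Subtype.coe_injective.ne hne)]

end Parameters

lemma pow_two_mul_add_one_sub_one_div {q : ℕ} (hq : 2 ≤ q) (a : ℕ) :
    (q ^ (2 * a + 1) - 1) / (q - 1) - 1 = q * ((q ^ a - 1) / (q - 1)) * (q ^ a + 1) := by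
  rw [← Nat.geomSum_eq hq, ← Nat.geomSum_eq hq, Finset.sum_range_succ', two_mul,
    Finset.sum_range_add]
  simp only [pow_succ, pow_add, pow_zero, ← Finset.sum_mul, ← Finset.mul_sum, Nat.add_sub_cancel]
  ring

theorem stmt13_general (q m : ℕ) (hm : 2 ≤ m)
    (F : Type*) [Field F] [Fintype F] (hcard : Fintype.card F = q)
    (B : (Fin (2 * m) → F) →ₗ[F] (Fin (2 * m) → F) →ₗ[F] F)
    (halt : ∀ v, B v v = 0)
    (hnondeg : ∀ v, (∀ w, B v w = 0) → v = 0) :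
    (polarGraph B).IsSRGWith
      ((q ^ (2 * m) - 1) / (q - 1))
      (q * ((q ^ (m - 1) - 1) / (q - 1)) * (q ^ (m - 1) + 1))
      ((q ^ (2 * m - 2) - 1) / (q - 1) - 2)
      ((q ^ (2 * m - 2) - 1) / (q - 1)) := by
  subst hcard
  have hB : B.IsAlt := halt
  have hnd : B.Nondegenerate := hB.isRefl.nondegenerate_iff_separatingLeft.2 hnondeg
  refine ⟨card_polarVertex, fun X => ?_, fun X Y hadj => ?_, fun X Y hne hadj => ?_⟩
  · rw [degree_polarGraph hB hnd, show 2 * m - 1 = 2 * (m - 1) + 1 by omega,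
      pow_two_mul_add_one_sub_one_div Fintype.one_lt_card]
  · exact card_commonNeighbors_polarGraph_of_adj hB hnd hadj
  · exact card_commonNeighbors_polarGraph_of_not_adj hB hnd hne hadj

theorem stmt13 (q m : ℕ) (hqpp : ∃ p t : ℕ, p.Prime ∧ 0 < t ∧ q = p ^ t) (hm : 2 ≤ m)
    (F : Type*) [Field F] [Fintype F] (hcard : Fintype.card F = q)
    (B : (Fin (2 * m) → F) →ₗ[F] (Fin (2 * m) → F) →ₗ[F] F)
    (halt : ∀ v, B v v = 0)
    (hnondeg : ∀ v, (∀ w, B v w = 0) → v = 0) :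
    (polarGraph B).IsSRGWith
      ((q ^ (2 * m) - 1) / (q - 1))
      (q * ((q ^ (m - 1) - 1) / (q - 1)) * (q ^ (m - 1) + 1))
      ((q ^ (2 * m - 2) - 1) / (q - 1) - 2)
      ((q ^ (2 * m - 2) - 1) / (q - 1)) :=
  stmt13_general q m hm F hcard B halt hnondeg
end
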